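/- arXiv:1412.5706 — 3 statements merged into one kernel-verified Lean document; each statement's English description precedes it below -/
import Mathlib

section
/- Let H be a finite-dimensional real inner product space, B self-adjoint positive definite on H, τ > 0, N ∈ ℕ, w₀ ∈ H, and ψ¹,…,ψᴺ ∈ H. Define w⁰ = w₀ and for n = 0,…,N−1 let w^{n+1} be the unique solution of (w^{n+1} − w^n)/τ + B w^{n+1} = ψ^{n+1}. Then ‖w^{n+1}‖² ≤ ‖w₀‖² + (1/2)∑_{k=0}^{n} τ ⟨B⁻¹ψ^{k+1}, ψ^{k+1}⟩ for all n < N. -/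
open scoped RealInnerProductSpace

/-!
Energy estimate: pairing the scheme with `w^{n+1}` gives
`(‖w^{n+1}‖² - ⟪w^n, w^{n+1}⟫) / τ + ⟪B w^{n+1}, w^{n+1}⟫ = ⟪ψ^{n+1}, w^{n+1}⟫`.
The cross term on the left is at most `(‖w^n‖² + ‖w^{n+1}‖²) / 2`, and positivity of
`B (w^{n+1} - B⁻¹ψ^{n+1} / 2)` bounds the right side by
`⟪B w^{n+1}, w^{n+1}⟫ + ⟪B⁻¹ψ^{n+1}, ψ^{n+1}⟫ / 4`. Hence each step raises `‖w^n‖²` by at most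
`τ ⟪B⁻¹ψ^{n+1}, ψ^{n+1}⟫ / 2`, and the bound telescopes.
-/

theorem le_add_sum_range_of_le_add {α : Type*} [AddCommGroup α] [PartialOrder α]
    [IsOrderedAddMonoid α] {a c : ℕ → α} {N : ℕ} (h : ∀ n < N, a (n + 1) ≤ a n + c n)
    {n : ℕ} (hn : n ≤ N) : a n ≤ a 0 + ∑ k ∈ Finset.range n, c k := by
  have hdiff := Finset.sum_le_sum fun k (hk : k ∈ Finset.range n) =>
    sub_le_iff_le_add'.2 (h k (by rw [Finset.mem_range] at hk; omega))
  rw [Finset.sum_range_sub] at hdiff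
  exact sub_le_iff_le_add'.1 hdiff

section

variable {H : Type*} [NormedAddCommGroup H] [InnerProductSpace ℝ H]

theorem LinearMap.IsPositive.inner_map_le_inner_map_self_add {B : H →ₗ[ℝ] H}
    (hB : B.IsPositive) (u v : H) : ⟪B u, v⟫ ≤ ⟪B v, v⟫ + ⟪B u, u⟫ / 4 := by
  have hnonneg := hB.inner_nonneg_left (v - (1 / 2 : ℝ) • u)
  have hsymm : ⟪B v, u⟫ = ⟪B u, v⟫ := by rw [hB.isSymmetric v u, real_inner_comm]
  simp only [map_sub, map_smul, inner_sub_left, inner_sub_right, real_inner_smul_left,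
    real_inner_smul_right] at hnonneg
  linarith

theorem norm_sq_le_of_backwardEuler_step {B : H →ₗ[ℝ] H} (hB : B.IsPositive) {τ : ℝ}
    (hτ : 0 < τ) {w v u : H} (hstep : (1 / τ) • (v - w) + B v = B u) :
    ‖v‖ ^ 2 ≤ ‖w‖ ^ 2 + τ / 2 * ⟪u, B u⟫ := by
  have henergy : (‖v‖ ^ 2 - ⟪w, v⟫) / τ + ⟪B v, v⟫ = ⟪B u, v⟫ := by
    rw [← hstep, inner_add_left, real_inner_smul_left, inner_sub_left,
      real_inner_self_eq_norm_sq]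
    ring
  have hcross : ⟪w, v⟫ ≤ (‖w‖ ^ 2 + ‖v‖ ^ 2) / 2 := by
    nlinarith [real_inner_le_norm w v, sq_nonneg (‖w‖ - ‖v‖)]
  have hdiss : (‖v‖ ^ 2 - ⟪w, v⟫) / τ ≤ ⟪B u, u⟫ / 4 := by
    linarith [hB.inner_map_le_inner_map_self_add u v]
  rw [div_le_iff₀ hτ] at hdiss
  rw [real_inner_comm]
  nlinarith

end

theorem stmt_5_general {H : Type*} [NormedAddCommGroup H] [InnerProductSpace ℝ H]
    (B Binv : H →ₗ[ℝ] H) (hB : B.IsSymmetric)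
    (hBpos : ∀ u : H, u ≠ 0 → 0 < ⟪B u, u⟫)
    (hinv1 : ∀ x, B (Binv x) = x)
    (τ : ℝ) (hτ : 0 < τ) (N : ℕ) (w₀ : H) (ψ : ℕ → H) (w : ℕ → H)
    (hw0 : w 0 = w₀)
    (hstep : ∀ n < N, (1 / τ) • (w (n + 1) - w n) + B (w (n + 1)) = ψ (n + 1)) :
    ∀ n < N, ‖w (n + 1)‖ ^ 2 ≤
      ‖w₀‖ ^ 2 + 1 / 2 * ∑ k ∈ Finset.range (n + 1), τ * ⟪Binv (ψ (k + 1)), ψ (k + 1)⟫ := by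
  have hBnonneg : B.IsPositive := B.isPositive_iff.2 ⟨hB, fun x => by
    rcases eq_or_ne x 0 with rfl | hx
    · simp
    · exact (hBpos x hx).le⟩
  have henergy_step : ∀ k < N, ‖w (k + 1)‖ ^ 2 ≤
      ‖w k‖ ^ 2 + 1 / 2 * (τ * ⟪Binv (ψ (k + 1)), ψ (k + 1)⟫) := by
    intro k hk
    have h := norm_sq_le_of_backwardEuler_step hBnonneg hτ (w := w k) (v := w (k + 1))
      (u := Binv (ψ (k + 1))) (by rw [hinv1]; exact hstep k hk)
    rw [hinv1] at h
    linarith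
  intro n hn
  rw [Finset.mul_sum, ← hw0]
  exact le_add_sum_range_of_le_add (a := fun k => ‖w k‖ ^ 2) henergy_step hn

theorem stmt_5 {H : Type*} [NormedAddCommGroup H] [InnerProductSpace ℝ H]
    [FiniteDimensional ℝ H]
    (B Binv : H →ₗ[ℝ] H) (hB : B.IsSymmetric)
    (hBpos : ∀ u : H, u ≠ 0 → 0 < ⟪B u, u⟫)
    (hinv1 : ∀ x, B (Binv x) = x) (hinv2 : ∀ x, Binv (B x) = x)
    (τ : ℝ) (hτ : 0 < τ) (N : ℕ) (w₀ : H) (ψ : ℕ → H) (w : ℕ → H)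
    (hw0 : w 0 = w₀)
    (hstep : ∀ n < N, (1 / τ) • (w (n + 1) - w n) + B (w (n + 1)) = ψ (n + 1)) :
    ∀ n < N, ‖w (n + 1)‖ ^ 2 ≤
      ‖w₀‖ ^ 2 + 1 / 2 * ∑ k ∈ Finset.range (n + 1), τ * ⟪Binv (ψ (k + 1)), ψ (k + 1)⟫ :=
  stmt_5_general B Binv hB hBpos hinv1 τ hτ N w₀ ψ w hw0 hstep
end

section
/- Let H be a finite-dimensional real inner product space, G : H → H self-adjoint positive semidefinite, δ > 0, η > 0, s ≥ 0, and β > 0. If y, y' ∈ H satisfy (sG + δI)(y' − y)/η + βG y' = 0, then ‖y'‖ ≤ ‖y‖. -/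
/-!
Write `A = s • G + δ • id`, so that the step reads `A (y - y') = η β G y'`. Since `⟪A v, v⟫ ≥ δ ‖v‖²`,
`A` is injective, hence bijective in finite dimension, and `y' = A u` for some `u`. As `A` commutes
with `G`, injectivity gives `y - y' = η β G u`, so
`⟪y - y', y'⟫ = η β (s ‖G u‖² + δ ⟪G u, u⟫) ≥ 0`, and `‖y‖² = ‖y'‖² + 2 ⟪y - y', y'⟫ + ‖y - y'‖²`.
-/

open scoped RealInnerProductSpace

section

variable {H : Type*} [NormedAddCommGroup H] [InnerProductSpace ℝ H]

theorem norm_le_norm_of_inner_sub_nonneg {x y : H} (h : 0 ≤ ⟪x - y, y⟫) : ‖y‖ ≤ ‖x‖ := by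
  have hx : ‖x‖ ^ 2 = ‖x - y‖ ^ 2 + 2 * ⟪x - y, y⟫ + ‖y‖ ^ 2 := by
    rw [← norm_add_sq_real, sub_add_cancel]
  exact le_of_sq_le_sq (by nlinarith [sq_nonneg ‖x - y‖]) (norm_nonneg x)

namespace LinearMap

variable (G : H →ₗ[ℝ] H) {s δ : ℝ}

theorem injective_smul_add_smul_id (hGpos : ∀ u : H, 0 ≤ ⟪G u, u⟫) (hs : 0 ≤ s) (hδ : 0 < δ) :
    Function.Injective (s • G + δ • (LinearMap.id : H →ₗ[ℝ] H)) := by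
  rw [← LinearMap.ker_eq_bot, LinearMap.ker_eq_bot']
  intro v hv
  have hinner : ⟪(s • G + δ • (LinearMap.id : H →ₗ[ℝ] H)) v, v⟫ = s * ⟪G v, v⟫ + δ * ‖v‖ ^ 2 := by
    simp only [add_apply, smul_apply, id_apply, inner_add_left, real_inner_smul_left,
      real_inner_self_eq_norm_sq]
  rw [hv, inner_zero_left] at hinner
  have hv0 : ‖v‖ ^ 2 = 0 := by nlinarith [mul_nonneg hs (hGpos v), sq_nonneg ‖v‖]
  simpa using hv0

theorem inner_nonneg_of_smul_add_smul_id_apply_eq [FiniteDimensional ℝ H]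
    (hGpos : ∀ u : H, 0 ≤ ⟪G u, u⟫) (hs : 0 ≤ s) (hδ : 0 < δ) {c : ℝ} (hc : 0 ≤ c) {d x : H}
    (h : (s • G + δ • (LinearMap.id : H →ₗ[ℝ] H)) d = c • G x) : 0 ≤ ⟪d, x⟫ := by
  set A := s • G + δ • (LinearMap.id : H →ₗ[ℝ] H) with hA_def
  have hA : Function.Injective A := injective_smul_add_smul_id G hGpos hs hδ
  obtain ⟨u, rfl⟩ := LinearMap.injective_iff_surjective.mp hA x
  have hd : d = c • G u := hA <| by
    rw [h, hA_def]
    simp only [add_apply, smul_apply, id_apply, map_add, map_smul]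
  have hinner : ⟪c • G u, A u⟫ = c * (s * ‖G u‖ ^ 2 + δ * ⟪G u, u⟫) := by
    simp only [hA_def, add_apply, smul_apply, id_apply, inner_add_right, real_inner_smul_left,
      real_inner_smul_right, real_inner_self_eq_norm_sq]
    ring
  rw [hd, hinner]
  exact mul_nonneg hc (add_nonneg (mul_nonneg hs (sq_nonneg _)) (mul_nonneg hδ.le (hGpos u)))

end LinearMap

end

theorem stmt_7_general {H : Type*} [NormedAddCommGroup H] [InnerProductSpace ℝ H]
    [FiniteDimensional ℝ H]
    (G : H →ₗ[ℝ] H) (hGpos : ∀ u : H, 0 ≤ ⟪G u, u⟫)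
    (δ η s β : ℝ) (hδ : 0 < δ) (hη : 0 < η) (hs : 0 ≤ s) (hβ : 0 < β)
    (y y' : H)
    (hstep : (s • G + δ • (LinearMap.id : H →ₗ[ℝ] H)) ((1 / η) • (y' - y)) + β • G y' = 0) :
    ‖y'‖ ≤ ‖y‖ := by
  have hstep' : (s • G + δ • (LinearMap.id : H →ₗ[ℝ] H)) (y - y') = (η * β) • G y' := by
    rw [← neg_sub y', map_neg, ← one_smul ℝ (y' - y), ← mul_one_div_cancel hη.ne', ← smul_smul,
      map_smul, eq_neg_of_add_eq_zero_left hstep, smul_neg, neg_neg, smul_smul]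
  exact norm_le_norm_of_inner_sub_nonneg
    (G.inner_nonneg_of_smul_add_smul_id_apply_eq hGpos hs hδ (by positivity) hstep')

theorem stmt_7 {H : Type*} [NormedAddCommGroup H] [InnerProductSpace ℝ H]
    [FiniteDimensional ℝ H]
    (G : H →ₗ[ℝ] H) (hG : G.IsSymmetric) (hGpos : ∀ u : H, 0 ≤ ⟪G u, u⟫)
    (δ η s β : ℝ) (hδ : 0 < δ) (hη : 0 < η) (hs : 0 ≤ s) (hβ : 0 < β)
    (y y' : H)
    (hstep : (s • G + δ • (LinearMap.id : H →ₗ[ℝ] H)) ((1 / η) • (y' - y)) + β • G y' = 0) :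
    ‖y'‖ ≤ ‖y‖ :=
  stmt_7_general G hGpos δ η s β hδ hη hs hβ y y' hstep
end

section
/- Let w : [0,T] → H be a differentiable curve in a finite-dimensional real inner product space H, let B be self-adjoint positive definite, and let ψ : [0,T] → H be continuous, with w'(t) + Bw(t) = ψ(t) for all t ∈ (0,T]. Then ‖w(t)‖² ≤ ‖w(0)‖² + (1/2)∫₀ᵗ ⟨B⁻¹ψ(θ), ψ(θ)⟩ dθ for all t ∈ [0,T]. -/
open scoped RealInnerProductSpace

private lemma key_ineq {H : Type*} [NormedAddCommGroup H] [InnerProductSpace ℝ H]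
    (B Binv : H →ₗ[ℝ] H) (hB : B.IsSymmetric)
    (hBpos : ∀ u : H, u ≠ 0 → 0 < ⟪B u, u⟫)
    (hinv1 : ∀ x, B (Binv x) = x) (u v : H) :
    2 * ⟪v, u⟫ ≤ 2 * ⟪B u, u⟫ + 1 / 2 * ⟪Binv v, v⟫ := by
  set x := Binv v with hx
  have hBnn : ∀ z : H, 0 ≤ ⟪B z, z⟫ := by
    intro z
    rcases eq_or_ne z 0 with rfl | hz
    · simp
    · exact (hBpos z hz).le
  have h0 : 0 ≤ ⟪B (u - (2⁻¹ : ℝ) • x), u - (2⁻¹ : ℝ) • x⟫ := hBnn _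
  have hsym : ⟪B x, u⟫ = ⟪B u, x⟫ := by
    rw [hB x u, real_inner_comm]
  have hvu : ⟪v, u⟫ = ⟪B x, u⟫ := by rw [hx, hinv1]
  have hv : v = B x := (hinv1 v).symm
  have hxx : ⟪x, v⟫ = ⟪B x, x⟫ := by
    nth_rewrite 1 [hv]; exact real_inner_comm _ _
  simp only [map_sub, map_smul, inner_sub_left, inner_sub_right,
    real_inner_smul_left, real_inner_smul_right] at h0
  show 2 * ⟪v, u⟫ ≤ 2 * ⟪B u, u⟫ + 1 / 2 * ⟪x, v⟫
  rw [hvu, hxx]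
  nlinarith [h0, hsym]

theorem stmt_16 {H : Type*} [NormedAddCommGroup H] [InnerProductSpace ℝ H]
    [FiniteDimensional ℝ H]
    (B Binv : H →ₗ[ℝ] H) (hB : B.IsSymmetric)
    (hBpos : ∀ u : H, u ≠ 0 → 0 < ⟪B u, u⟫)
    (hinv1 : ∀ x, B (Binv x) = x) (hinv2 : ∀ x, Binv (B x) = x)
    (T : ℝ) (hT : 0 < T) (w dw ψ : ℝ → H)
    (hdiff : ∀ t ∈ Set.Icc (0 : ℝ) T, HasDerivAt w (dw t) t)
    (hψ : ContinuousOn ψ (Set.Icc (0 : ℝ) T))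
    (heq : ∀ t ∈ Set.Ioc (0 : ℝ) T, dw t + B (w t) = ψ t) :
    ∀ t ∈ Set.Icc (0 : ℝ) T,
      ‖w t‖ ^ 2 ≤ ‖w 0‖ ^ 2 + 1 / 2 * ∫ θ in (0 : ℝ)..t, ⟪Binv (ψ θ), ψ θ⟫ := by
  set q : ℝ → ℝ := fun θ => ⟪Binv (ψ θ), ψ θ⟫ with hqdef
  have hBinvc : Continuous Binv := Binv.continuous_of_finiteDimensional
  have hqcont : ContinuousOn q (Set.Icc 0 T) := by
    apply ContinuousOn.inner
    · exact hBinvc.comp_continuousOn hψ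
    · exact hψ
  have hqint : MeasureTheory.IntegrableOn q (Set.Icc 0 T) :=
    hqcont.integrableOn_Icc
  set F : ℝ → ℝ := fun t => ‖w t‖ ^ 2 - 1 / 2 * ∫ θ in (0 : ℝ)..t, q θ with hFdef
  have hwcont : ContinuousOn w (Set.Icc 0 T) := fun t ht =>
    (hdiff t ht).continuousAt.continuousWithinAt
  have hIcont : ContinuousOn (fun t => ∫ θ in (0 : ℝ)..t, q θ) (Set.Icc 0 T) := by
    have := intervalIntegral.continuousOn_primitive_interval
      (μ := MeasureTheory.volume) (f := q) (a := 0) (b := T)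
      (by rwa [Set.uIcc_of_le hT.le])
    rwa [Set.uIcc_of_le hT.le] at this
  have hFcont : ContinuousOn F (Set.Icc 0 T) := by
    apply ContinuousOn.sub
    · exact (hwcont.norm.pow 2)
    · exact hIcont.const_smul (1 / 2 : ℝ)
  -- derivative facts at interior points
  have hderF : ∀ x ∈ Set.Ioo (0 : ℝ) T,
      HasDerivAt F (2 * ⟪dw x, w x⟫ - 1 / 2 * q x) x := by
    intro x hx
    have hxI : x ∈ Set.Icc (0 : ℝ) T := Set.Ioo_subset_Icc_self hx
    have hw' : HasDerivAt (fun t => ‖w t‖ ^ 2) (2 * ⟪dw x, w x⟫) x := by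
      have h1 : HasDerivAt (fun t => ⟪w t, w t⟫)
          (⟪w x, dw x⟫ + ⟪dw x, w x⟫) x :=
        HasDerivAt.inner ℝ (hdiff x hxI) (hdiff x hxI)
      have h2 : (fun t => ⟪w t, w t⟫) = fun t => ‖w t‖ ^ 2 := by
        funext t; exact real_inner_self_eq_norm_sq (w t)
      rw [h2] at h1
      convert h1 using 1
      rw [real_inner_comm (w x) (dw x)]; ring
    have hqat : ContinuousAt q x :=
      (hqcont.continuousAt (Icc_mem_nhds hx.1 hx.2))
    have hmeas : StronglyMeasurableAtFilter q (nhds x) :=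
      ⟨Set.Ioo 0 T, isOpen_Ioo.mem_nhds hx,
        (hqcont.mono Set.Ioo_subset_Icc_self).aestronglyMeasurable
          measurableSet_Ioo⟩
    have hsub : Set.uIcc (0 : ℝ) x ⊆ Set.Icc 0 T := by
      rw [Set.uIcc_of_le hx.1.le]
      exact Set.Icc_subset_Icc le_rfl hx.2.le
    have hint : IntervalIntegrable q MeasureTheory.volume 0 x :=
      (hqint.mono_set hsub).intervalIntegrable
    have hI' : HasDerivAt (fun u => ∫ θ in (0 : ℝ)..u, q θ) (q x) x :=
      intervalIntegral.integral_hasDerivAt_right hint hmeas hqat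
    exact hw'.sub ((hI').const_mul (1 / 2 : ℝ))
  have hanti : AntitoneOn F (Set.Icc 0 T) := by
    apply antitoneOn_of_deriv_nonpos (convex_Icc 0 T) hFcont
    · intro x hx
      rw [interior_Icc] at hx
      exact ((hderF x hx).differentiableAt).differentiableWithinAt
    · intro x hx
      rw [interior_Icc] at hx
      rw [(hderF x hx).deriv]
      have hxIoc : x ∈ Set.Ioc (0 : ℝ) T := ⟨hx.1, hx.2.le⟩
      have hdwx : dw x = ψ x - B (w x) := by
        have := heq x hxIoc
        linear_combination (norm := module) this
      have := key_ineq B Binv hB hBpos hinv1 (w x) (ψ x)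
      rw [hdwx, inner_sub_left]
      simp only [hqdef]
      linarith
  intro t ht
  have h0 : (0 : ℝ) ∈ Set.Icc (0 : ℝ) T := ⟨le_rfl, hT.le⟩
  have := hanti h0 ht ht.1
  simp only [hFdef, intervalIntegral.integral_same, mul_zero, sub_zero] at this
  simp only [hqdef] at this
  linarith
end
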